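/- arXiv:2011.07540 — 3 statements merged into one kernel-verified Lean document; each statement's English description precedes it below -/
import Mathlib

section
/- Let m ≥ 1 and ℓ be integers. For all τ ∈ ℍ and z ∈ ℂ, ϑ_{m,ℓ}(−1/τ, z/τ) = √(τ/(2mi)) · exp(2πimz²/τ) · Σ_{ℓ' = 0}^{2m−1} exp(−πiℓℓ'/m) · ϑ_{m,ℓ'}(τ, z), where √ denotes the principal branch of the square root (note Re(τ/(2mi)) > 0 for τ ∈ ℍ). -/
/-!
Writing `r = ℓ + 2mn` turns `ϑ_{m,ℓ}(τ, z)` into `e(ℓ²τ/4m + ℓz) · θ(ℓτ + 2mz, 2mτ)`, where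
`θ = jacobiTheta₂`. At `(−1/τ, z/τ)` the theta factor is `θ(z₀/τ₀, −1/τ₀)` with `z₀ = z − ℓ/2m` and
`τ₀ = τ/2m`, so the inversion formula for `θ` applies. Conversely, splitting the series for
`θ(z₀, τ₀)` by the residue of the summation index mod `2m` gives
`Σ_{ℓ'} e(−ℓℓ'/2m) ϑ_{m,ℓ'}(τ, z)`, since `e(−ℓr/2m)` only depends on `r` mod `2m`.
-/

open Complex

/-- The Jacobi theta function `ϑ_{m,ℓ}(τ, z) = Σ_{r ∈ ℤ, r ≡ ℓ mod 2m} e(r²τ/(4m) + rz)`. -/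
noncomputable def jacobiThetaML (m ℓ : ℤ) (τ z : ℂ) : ℂ :=
  ∑' r : {r : ℤ // r ≡ ℓ [ZMOD 2 * m]},
    Complex.exp (2 * Real.pi * Complex.I *
      (((r : ℤ) : ℂ) ^ 2 * τ / (4 * m) + ((r : ℤ) : ℂ) * z))

open Real

def Int.equivModEq (a : ℤ) {N : ℤ} (hN : N ≠ 0) : ℤ ≃ {r : ℤ // r ≡ a [ZMOD N]} where
  toFun n := ⟨a + N * n, (Int.modEq_iff_dvd.mpr ⟨n, by ring⟩).symm⟩
  invFun r := (r - a) / N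
  left_inv n := by simp [Int.mul_ediv_cancel_left _ hN]
  right_inv r := by
    obtain ⟨k, hk⟩ := Int.modEq_iff_dvd.mp r.2.symm
    ext
    simp only [hk, Int.mul_ediv_cancel_left _ hN]
    omega

theorem Int.modEq_natCast_iff_eq_toNat_emod {N r : ℤ} (hN : 0 < N) {b : ℕ} (hb : b < N.toNat) :
    r ≡ b [ZMOD N] ↔ b = (r % N).toNat := by
  have h₀ := Int.emod_nonneg r hN.ne'
  rw [Int.ModEq, Int.emod_eq_of_lt (Int.natCast_nonneg b) (by omega)]
  omega

theorem tsum_eq_sum_range_tsum_modEq {E : Type*} [AddCommGroup E] [UniformSpace E]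
    [IsUniformAddGroup E] [CompleteSpace E] [T2Space E] {f : ℤ → E} (hf : Summable f) {N : ℤ}
    (hN : 0 < N) :
    ∑' r, f r = ∑ b ∈ Finset.range N.toNat, ∑' r : {r : ℤ // r ≡ b [ZMOD N]}, f r := by
  have hclass (b : ℕ) : ∑' r : {r : ℤ // r ≡ b [ZMOD N]}, f r =
      ∑' r, {r : ℤ | r ≡ b [ZMOD N]}.indicator f r :=
    tsum_subtype {r : ℤ | r ≡ b [ZMOD N]} f
  simp only [hclass]
  rw [← Summable.tsum_finsetSum fun b _ ↦ hf.indicator _]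
  refine tsum_congr fun r ↦ ?_
  have hr : (r % N).toNat ∈ Finset.range N.toNat := by
    have := Int.emod_lt_of_pos r hN
    simp only [Finset.mem_range]
    omega
  calc f r = ∑ b ∈ Finset.range N.toNat, if b = (r % N).toNat then f r else 0 := by
        rw [Finset.sum_ite_eq', if_pos hr]
    _ = _ := Finset.sum_congr rfl fun b hb ↦ by
        simp only [Set.indicator_apply, Set.mem_ofPred_eq,
          Int.modEq_natCast_iff_eq_toNat_emod hN (Finset.mem_range.mp hb)]

theorem jacobiThetaML_eq_mul_jacobiTheta₂ (m ℓ : ℤ) (hm : m ≠ 0) (τ z : ℂ) :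
    jacobiThetaML m ℓ τ z =
      cexp (2 * π * I * (ℓ ^ 2 * τ / (4 * m) + ℓ * z)) *
        jacobiTheta₂ (ℓ * τ + 2 * m * z) (2 * m * τ) := by
  have hmC : (m : ℂ) ≠ 0 := Int.cast_ne_zero.mpr hm
  rw [jacobiThetaML, ← (Int.equivModEq ℓ (mul_ne_zero two_ne_zero hm)).tsum_eq, jacobiTheta₂,
    ← tsum_mul_left]
  refine tsum_congr fun n ↦ ?_
  rw [jacobiTheta₂_term, ← Complex.exp_add]
  congr 1
  simp only [Int.equivModEq, Equiv.coe_fn_mk]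
  push_cast
  field_simp
  ring

theorem cexp_neg_pi_I_mul_div_eq_of_modEq (ℓ : ℤ) {m r b : ℤ} (hm : m ≠ 0)
    (h : r ≡ b [ZMOD 2 * m]) :
    cexp (-π * I * ℓ * r / m) = cexp (-π * I * ℓ * b / m) := by
  obtain ⟨k, hk⟩ := Int.modEq_iff_dvd.mp h.symm
  have hmC : (m : ℂ) ≠ 0 := Int.cast_ne_zero.mpr hm
  rw [show r = b + 2 * m * k by omega, Complex.exp_eq_exp_iff_exists_int]
  exact ⟨-ℓ * k, by push_cast; field_simp; ring⟩

theorem jacobiTheta₂_term_sub_div (m ℓ r : ℤ) (hm : m ≠ 0) (τ z : ℂ) :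
    jacobiTheta₂_term r (z - ℓ / (2 * m)) (τ / (2 * m)) =
      cexp (-π * I * ℓ * r / m) * cexp (2 * π * I * (r ^ 2 * τ / (4 * m) + r * z)) := by
  have hmC : (m : ℂ) ≠ 0 := Int.cast_ne_zero.mpr hm
  rw [jacobiTheta₂_term, ← Complex.exp_add]
  congr 1
  field_simp
  ring

theorem jacobiTheta₂_sub_div_eq_sum_jacobiThetaML (m ℓ : ℤ) (hm : 0 < m) (τ : ℂ) (hτ : 0 < τ.im)
    (z : ℂ) :
    jacobiTheta₂ (z - ℓ / (2 * m)) (τ / (2 * m)) =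
      ∑ l' ∈ Finset.range (2 * m).toNat,
        cexp (-π * I * ℓ * (l' : ℂ) / m) * jacobiThetaML m (l' : ℤ) τ z := by
  have hτ' : 0 < (τ / (2 * m)).im := by
    rw [show (2 * m : ℂ) = ((2 * m : ℝ) : ℂ) by push_cast; rfl, Complex.div_ofReal_im]
    exact div_pos hτ (by exact_mod_cast (by omega : 0 < 2 * m))
  rw [jacobiTheta₂, tsum_eq_sum_range_tsum_modEq (hasSum_jacobiTheta₂_term _ hτ').summable
    (by omega : 0 < 2 * m)]
  refine Finset.sum_congr rfl fun l' _ ↦ ?_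
  rw [jacobiThetaML, ← tsum_mul_left]
  refine tsum_congr fun r ↦ ?_
  rw [jacobiTheta₂_term_sub_div m ℓ r hm.ne', cexp_neg_pi_I_mul_div_eq_of_modEq ℓ hm.ne' r.2]
  rfl

theorem jacobiTheta₂_div_neg_inv {τ : ℂ} (hτ : τ ≠ 0) (z : ℂ) :
    jacobiTheta₂ (z / τ) (-1 / τ) =
      (-I * τ) ^ (1 / 2 : ℂ) * cexp (π * I * z ^ 2 / τ) * jacobiTheta₂ z τ := by
  have hsqrt : (-I * τ) ^ (1 / 2 : ℂ) ≠ 0 := by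
    simp [Complex.cpow_eq_zero_iff, hτ, I_ne_zero]
  have hexp : cexp (π * I * z ^ 2 / τ) * cexp (-π * I * z ^ 2 / τ) = 1 := by
    rw [← Complex.exp_add, neg_mul, neg_mul, neg_div, add_neg_cancel, Complex.exp_zero]
  rw [jacobiTheta₂_functional_equation z τ]
  linear_combination (-jacobiTheta₂ (z / τ) (-1 / τ)) * hexp -
    jacobiTheta₂ (z / τ) (-1 / τ) * cexp (π * I * z ^ 2 / τ) * cexp (-π * I * z ^ 2 / τ) *
      mul_one_div_cancel hsqrt

/-- Modular inversion behaviour of `ϑ_{m,ℓ}`: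
`ϑ_{m,ℓ}(−1/τ, z/τ) = √(τ/(2mi)) · exp(2πimz²/τ) · Σ_{ℓ'=0}^{2m−1} exp(−πiℓℓ'/m) ϑ_{m,ℓ'}(τ, z)`,
where the square root is the principal branch (realized by the principal power `w ^ (1/2)`). -/
theorem jacobiThetaML_S (m ℓ : ℤ) (hm : 1 ≤ m) (τ : ℂ) (hτ : 0 < τ.im) (z : ℂ) :
    jacobiThetaML m ℓ (-1 / τ) (z / τ) =
      (τ / (2 * (m : ℂ) * Complex.I)) ^ ((1 : ℂ) / 2) *
        Complex.exp (2 * Real.pi * Complex.I * m * z ^ 2 / τ) *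
        ∑ l' ∈ Finset.range (2 * m).toNat,
          Complex.exp (-(Real.pi : ℂ) * Complex.I * (ℓ : ℂ) * (l' : ℂ) / m) *
            jacobiThetaML m (l' : ℤ) τ z := by
  have hmC : (m : ℂ) ≠ 0 := Int.cast_ne_zero.mpr (by omega)
  have hτ₀ : τ ≠ 0 := fun h ↦ by simp [h] at hτ
  have hz : ℓ * (-1 / τ) + 2 * m * (z / τ) = (z - ℓ / (2 * m)) / (τ / (2 * m)) := by
    field_simp
    ring
  have hτ' : 2 * m * (-1 / τ) = -1 / (τ / (2 * m)) := by
    field_simp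
  have hbase : τ / (2 * m * I) = -I * (τ / (2 * m)) := by
    rw [← div_div, div_I]
    ring
  have hexp : cexp (2 * π * I * (ℓ ^ 2 * (-1 / τ) / (4 * m) + ℓ * (z / τ))) *
      cexp (π * I * (z - ℓ / (2 * m)) ^ 2 / (τ / (2 * m))) = cexp (2 * π * I * m * z ^ 2 / τ) := by
    rw [← Complex.exp_add]
    congr 1
    field_simp
    ring
  rw [jacobiThetaML_eq_mul_jacobiTheta₂ m ℓ (by omega), hz, hτ',
    jacobiTheta₂_div_neg_inv (div_ne_zero hτ₀ (by simpa using hmC)),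
    jacobiTheta₂_sub_div_eq_sum_jacobiThetaML m ℓ hm τ hτ z, hbase, ← hexp]
  ring
end

section
/- Let k ∈ ℤ, let m ≥ 1 and ℓ be integers, and let h : ℍ → ℂ be twice continuously differentiable (as a function of (u, v) with τ = u + iv). For each fixed τ ∈ ℍ, the function Φ(τ, z) := h(τ) ϑ_{m,ℓ}(τ, z) satisfies (C^sk_{k,m} Φ)(τ, z) = 0 for all z ∈ ℂ if and only if 2iv(k − 1/2)(∂_τ h)(τ) + 4v²(∂_τ ∂_τ̄ h)(τ) = 0, where v = Im τ. -/
/-!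
The theta function `ϑ_{m,ℓ}(τ, z)` is the part of `Θ(z, τ/2m) = Σₙ e^{2πinz + πin²τ/2m}`
supported on `n ≡ ℓ mod 2m`. Termwise differentiation shows that it is holomorphic in `τ` and
solves the heat equation `8πim ∂_τ ϑ = ∂²_z ϑ`, so `L_m(hϑ) = 8πim (∂_τ h) ϑ`. As `∂_τ̄ ϑ = 0`,
`∂_τ̄ v^α = (iα/2) v^{α-1}` and `∂_τ̄ ∂_τ h = ∂_τ ∂_τ̄ h` for `C²` functions, this gives
`C^sk_{k,m}(hϑ) = 2ϑ · (2iv(k - 1/2) ∂_τ h + 4v² ∂_τ ∂_τ̄ h)`. Finally `ϑ(τ, ·)` does not vanish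
identically: on the real line it is an absolutely convergent Fourier series whose `ℓ`-th
coefficient `e^{πiℓ²τ/2m}` is nonzero.
-/

open Complex ComplexConjugate

/-- Real partial derivative of `f : ℂ → ℂ` at `τ` in the direction `w`. -/
noncomputable def partialDeriv (w : ℂ) (f : ℂ → ℂ) (τ : ℂ) : ℂ := fderiv ℝ f τ w

/-- Wirtinger derivative `∂_τ f = (1/2)(∂f/∂u − i ∂f/∂v)` where `τ = u + iv`. -/
noncomputable def dTau (f : ℂ → ℂ) : ℂ → ℂ :=
  fun τ => (1 / 2) * (partialDeriv 1 f τ - Complex.I * partialDeriv Complex.I f τ)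

/-- Wirtinger derivative `∂_τ̄ f = (1/2)(∂f/∂u + i ∂f/∂v)` where `τ = u + iv`. -/
noncomputable def dTauBar (f : ℂ → ℂ) : ℂ → ℂ :=
  fun τ => (1 / 2) * (partialDeriv 1 f τ + Complex.I * partialDeriv Complex.I f τ)

/-- The heat operator `L_m = 8πim ∂_τ − ∂²/∂z²` acting on `Φ(τ, z)`. -/
noncomputable def heatOp (m : ℤ) (Φ : ℂ → ℂ → ℂ) (τ z : ℂ) : ℂ :=
  8 * Real.pi * Complex.I * (m : ℂ) * dTau (fun w => Φ w z) τ - iteratedDeriv 2 (Φ τ) z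

/-- The skew Casimir operator
`C^sk_{k,m} = −(iv²/(πm)) v^{1/2−k} ∘ ∂_τ̄ ∘ v^{k−1/2} ∘ L_m`, `v = Im τ`. -/
noncomputable def skewCasimir (k m : ℤ) (Φ : ℂ → ℂ → ℂ) (τ z : ℂ) : ℂ :=
  -(Complex.I * (τ.im : ℂ) ^ 2 / (Real.pi * m)) *
    ((τ.im ^ ((1 : ℝ) / 2 - (k : ℝ)) : ℝ) : ℂ) *
    dTauBar (fun w => ((w.im ^ ((k : ℝ) - 1 / 2) : ℝ) : ℂ) * heatOp m Φ w z) τ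

/-- The weight-`κ` hyperbolic Laplacian
`Δ_κ = −v²(∂²/∂u² + ∂²/∂v²) + iκv(∂/∂u + i ∂/∂v)`, `τ = u + iv`. -/
noncomputable def hypLaplacian (κ : ℝ) (f : ℂ → ℂ) (τ : ℂ) : ℂ :=
  -(τ.im : ℂ) ^ 2 *
      (partialDeriv 1 (partialDeriv 1 f) τ +
        partialDeriv Complex.I (partialDeriv Complex.I f) τ) +
    Complex.I * (κ : ℂ) * (τ.im : ℂ) *
      (partialDeriv 1 f τ + Complex.I * partialDeriv Complex.I f τ)

open scoped Real
open Filter Topology MeasureTheory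

lemma norm_exp_two_pi_I_int_mul (j : ℤ) (x : ℝ) : ‖cexp (2 * π * I * j * x)‖ = 1 := by
  rw [show (2 * π * I * j * x : ℂ) = ((2 * π * j * x : ℝ) : ℂ) * I by push_cast; ring,
    Complex.norm_exp_ofReal_mul_I]

lemma integral_exp_two_pi_I_int_mul (j : ℤ) :
    ∫ x in (0 : ℝ)..1, cexp (2 * π * I * j * x) = if j = 0 then 1 else 0 := by
  split_ifs with hj
  · simp [hj]
  have hc : 2 * π * I * j ≠ 0 := by simp [hj, Real.pi_ne_zero, I_ne_zero]
  rw [integral_exp_mul_complex hc, ofReal_one, mul_one, ofReal_zero, mul_zero, exp_zero,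
    show 2 * π * I * j = j * (2 * π * I) by ring, exp_int_mul_two_pi_mul_I, sub_self, zero_div]

lemma eq_zero_of_forall_tsum_mul_exp_eq_zero {c : ℤ → ℂ} (hc : Summable fun n => ‖c n‖)
    (h : ∀ x : ℝ, ∑' n, c n * cexp (2 * π * I * n * x) = 0) (k : ℤ) : c k = 0 := by
  set F : ℤ → ℝ → ℂ := fun n x => c n * cexp (2 * π * I * (n - k : ℤ) * x)
  have hF_zero (x : ℝ) : ∑' n, F n x = 0 := by
    have hsplit (n : ℤ) :
        F n x = c n * cexp (2 * π * I * n * x) * cexp (-(2 * π * I * k * x)) := by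
      rw [mul_assoc, ← Complex.exp_add]
      simp only [F]
      push_cast
      ring_nf
    simp only [hsplit, tsum_mul_right, h x, zero_mul]
  have hF_int (n : ℤ) : Integrable (F n) (volume.restrict (Set.Ioc 0 1)) :=
    Continuous.integrableOn_Ioc (by fun_prop)
  have hF_norm (n : ℤ) : ∫ x in Set.Ioc (0 : ℝ) 1, ‖F n x‖ = ‖c n‖ := by
    simp only [F, norm_mul, norm_exp_two_pi_I_int_mul, mul_one]
    simp
  have hF_integral (n : ℤ) : ∫ x in Set.Ioc (0 : ℝ) 1, F n x = if n = k then c n else 0 := by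
    rw [← intervalIntegral.integral_of_le zero_le_one, intervalIntegral.integral_const_mul,
      integral_exp_two_pi_I_int_mul]
    simp only [sub_eq_zero]
    split_ifs <;> simp
  have := integral_tsum_of_summable_integral_norm hF_int (by simpa only [hF_norm] using hc)
  simpa only [hF_integral, tsum_ite_eq, hF_zero, integral_zero] using this

def HasPolyGrowth (a : ℤ → ℂ) : Prop := ∃ C : ℝ, ∃ p : ℕ, ∀ n, ‖a n‖ ≤ C * |(n : ℝ)| ^ p

lemma HasPolyGrowth.const_mul_pow {a : ℤ → ℂ} (ha : HasPolyGrowth a) (c : ℂ) (k : ℕ) :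
    HasPolyGrowth fun n => c * (n : ℂ) ^ k * a n := by
  obtain ⟨C, p, hC⟩ := ha
  refine ⟨‖c‖ * C, k + p, fun n => ?_⟩
  rw [norm_mul, norm_mul, norm_pow, Complex.norm_intCast, pow_add]
  have := mul_le_mul_of_nonneg_left (hC n) (by positivity : 0 ≤ ‖c‖ * |(n : ℝ)| ^ k)
  linarith

/-- `Θ_a(z, τ) = Σₙ aₙ e^{2πinz + πin²τ}`; for `a = 1` this is `jacobiTheta₂ z τ`. -/
noncomputable def thetaSeries (a : ℤ → ℂ) (z τ : ℂ) : ℂ :=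
  ∑' n : ℤ, a n * jacobiTheta₂_term n z τ

lemma hasDerivAt_jacobiTheta₂_term_fst (n : ℤ) (z τ : ℂ) :
    HasDerivAt (jacobiTheta₂_term n · τ) (2 * π * I * n * jacobiTheta₂_term n z τ) z := by
  have := (((hasDerivAt_id z).const_mul (2 * π * I * n)).add_const (π * I * n ^ 2 * τ)).cexp
  simpa only [jacobiTheta₂_term, id, mul_one, mul_comm (cexp _)] using this

lemma hasDerivAt_jacobiTheta₂_term_snd (n : ℤ) (z τ : ℂ) :
    HasDerivAt (jacobiTheta₂_term n z ·) (π * I * n ^ 2 * jacobiTheta₂_term n z τ) τ := by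
  have := (((hasDerivAt_id τ).const_mul (π * I * n ^ 2)).const_add (2 * π * I * n * z)).cexp
  simpa only [jacobiTheta₂_term, id, mul_one, mul_comm (cexp _)] using this

section thetaSeries

variable {a : ℤ → ℂ}

lemma HasPolyGrowth.exists_summable_bound (ha : HasPolyGrowth a) (S : ℝ) {T : ℝ} (hT : 0 < T) :
    ∃ u : ℤ → ℝ, Summable u ∧ ∀ n {z τ : ℂ}, |z.im| ≤ S → T ≤ τ.im →
      ‖a n * jacobiTheta₂_term n z τ‖ ≤ u n := by
  obtain ⟨C, p, hC⟩ := ha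
  refine ⟨fun n => C * (|(n : ℝ)| ^ p * Real.exp (-π * (T * n ^ 2 - 2 * S * |(n : ℝ)|))),
    by simpa only [Int.cast_abs] using
      (summable_pow_mul_jacobiTheta₂_term_bound S hT p).mul_left C,
    fun n z τ hz hτ => ?_⟩
  dsimp only
  rw [norm_mul, ← mul_assoc]
  refine mul_le_mul (hC n) ?_ (norm_nonneg _) ((norm_nonneg _).trans (hC n))
  simpa only [Int.cast_abs] using norm_jacobiTheta₂_term_le hT hz hτ n

lemma HasPolyGrowth.summable_mul_jacobiTheta₂_term (ha : HasPolyGrowth a) (z : ℂ) {τ : ℂ}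
    (hτ : 0 < τ.im) : Summable fun n => a n * jacobiTheta₂_term n z τ := by
  obtain ⟨u, hu, hbound⟩ := ha.exists_summable_bound |z.im| hτ
  exact hu.of_norm_bounded fun n => hbound n le_rfl le_rfl

lemma hasDerivAt_thetaSeries_fst (ha : HasPolyGrowth a) (z : ℂ) {τ : ℂ} (hτ : 0 < τ.im) :
    HasDerivAt (thetaSeries a · τ) (thetaSeries (fun n => 2 * π * I * n * a n) z τ) z := by
  obtain ⟨S, hzS⟩ := exists_gt |z.im|
  obtain ⟨u, hu, hbound⟩ := (ha.const_mul_pow (2 * π * I) 1).exists_summable_bound S hτ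
  have hV : IsOpen {w : ℂ | |w.im| < S} :=
    (_root_.continuous_abs.comp continuous_im).isOpen_preimage _ isOpen_Iio
  have hVc : IsPreconnected {w : ℂ | |w.im| < S} := by
    refine Convex.isPreconnected ?_
    simpa only [abs_lt, Set.ofPred_and] using
      (convex_halfSpace_im_gt _).inter (convex_halfSpace_im_lt _)
  have := hasDerivAt_tsum_of_isPreconnected (g := fun n w => a n * jacobiTheta₂_term n w τ)
    (g' := fun n w => 2 * π * I * n * a n * jacobiTheta₂_term n w τ) hu hV hVc
    (fun n w _ => ?_) (fun n w hw => ?_) hzS (ha.summable_mul_jacobiTheta₂_term z hτ) hzS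
  · exact this
  · exact ((hasDerivAt_jacobiTheta₂_term_fst n w τ).const_mul (a n)).congr_deriv (by ring)
  · simpa only [pow_one] using hbound n hw.le le_rfl

lemma hasDerivAt_thetaSeries_snd (ha : HasPolyGrowth a) (z : ℂ) {τ : ℂ} (hτ : 0 < τ.im) :
    HasDerivAt (thetaSeries a z ·) (thetaSeries (fun n => π * I * n ^ 2 * a n) z τ) τ := by
  obtain ⟨T, hT, hTτ⟩ := exists_between hτ
  obtain ⟨u, hu, hbound⟩ := (ha.const_mul_pow (π * I) 2).exists_summable_bound |z.im| hT
  have := hasDerivAt_tsum_of_isPreconnected (g := fun n w => a n * jacobiTheta₂_term n z w)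
    (g' := fun n w => π * I * n ^ 2 * a n * jacobiTheta₂_term n z w) hu
    (continuous_im.isOpen_preimage _ isOpen_Ioi) (convex_halfSpace_im_gt T).isPreconnected
    (fun n w _ => ?_) (fun n w hw => hbound n le_rfl (le_of_lt hw)) hTτ
    (ha.summable_mul_jacobiTheta₂_term z hτ) hTτ
  · exact this
  · exact ((hasDerivAt_jacobiTheta₂_term_snd n z w).const_mul (a n)).congr_deriv (by ring)

lemma thetaSeries_const_mul (c : ℂ) (z τ : ℂ) :
    thetaSeries (fun n => c * a n) z τ = c * thetaSeries a z τ := by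
  simp only [thetaSeries, mul_assoc, tsum_mul_left]

/-- The heat equation `∂²_z Θ_a = 4πi ∂_τ Θ_a`. -/
lemma iteratedDeriv_two_thetaSeries (ha : HasPolyGrowth a) (z : ℂ) {τ : ℂ} (hτ : 0 < τ.im) :
    iteratedDeriv 2 (thetaSeries a · τ) z =
      4 * π * I * thetaSeries (fun n => π * I * n ^ 2 * a n) z τ := by
  have hb : HasPolyGrowth fun n => 2 * π * I * n * a n := by
    simpa only [pow_one] using ha.const_mul_pow (2 * π * I) 1
  have hderiv :
      deriv (thetaSeries a · τ) = (thetaSeries (fun n => 2 * π * I * n * a n) · τ) :=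
    funext fun w => (hasDerivAt_thetaSeries_fst ha w hτ).deriv
  rw [iteratedDeriv_succ, iteratedDeriv_one, hderiv, (hasDerivAt_thetaSeries_fst hb z hτ).deriv,
    ← thetaSeries_const_mul]
  congr 1
  funext n
  ring

lemma HasPolyGrowth.eq_zero_of_forall_thetaSeries_eq_zero (ha : HasPolyGrowth a) {τ : ℂ}
    (hτ : 0 < τ.im) (h : ∀ x : ℝ, thetaSeries a x τ = 0) : a = 0 := by
  obtain ⟨u, hu, hbound⟩ := ha.exists_summable_bound 0 hτ
  have hc : Summable fun n => ‖a n * jacobiTheta₂_term n 0 τ‖ :=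
    hu.of_nonneg_of_le (fun _ => norm_nonneg _) fun n => hbound n (by simp) le_rfl
  have hsplit (n : ℤ) (x : ℝ) : a n * jacobiTheta₂_term n x τ =
      a n * jacobiTheta₂_term n 0 τ * cexp (2 * π * I * n * x) := by
    rw [mul_assoc, jacobiTheta₂_term, jacobiTheta₂_term, ← Complex.exp_add]
    ring_nf
  funext n
  have := eq_zero_of_forall_tsum_mul_exp_eq_zero hc
    (fun x => by simpa only [thetaSeries, hsplit] using h x) n
  simpa [jacobiTheta₂_term, Complex.exp_ne_zero] using this

end thetaSeries

section Wirtinger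

variable {f g : ℂ → ℂ} {τ : ℂ}

lemma partialDeriv_of_hasDerivAt {a : ℂ} (hf : HasDerivAt f a τ) (d : ℂ) :
    partialDeriv d f τ = d * a := by
  rw [partialDeriv, (hf.hasFDerivAt.restrictScalars ℝ).fderiv]
  simp [smul_eq_mul]

lemma dTau_of_hasDerivAt {a : ℂ} (hf : HasDerivAt f a τ) : dTau f τ = a := by
  rw [dTau, partialDeriv_of_hasDerivAt hf, partialDeriv_of_hasDerivAt hf]
  linear_combination (-a / 2) * I_sq

lemma dTauBar_of_hasDerivAt {a : ℂ} (hf : HasDerivAt f a τ) : dTauBar f τ = 0 := by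
  rw [dTauBar, partialDeriv_of_hasDerivAt hf, partialDeriv_of_hasDerivAt hf]
  linear_combination (a / 2) * I_sq

lemma partialDeriv_mul (hf : DifferentiableAt ℝ f τ) (hg : DifferentiableAt ℝ g τ) (d : ℂ) :
    partialDeriv d (fun w => f w * g w) τ =
      f τ * partialDeriv d g τ + g τ * partialDeriv d f τ := by
  simp [partialDeriv, fderiv_fun_mul hf hg, smul_eq_mul]

lemma dTau_mul (hf : DifferentiableAt ℝ f τ) (hg : DifferentiableAt ℝ g τ) :
    dTau (fun w => f w * g w) τ = f τ * dTau g τ + g τ * dTau f τ := by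
  simp only [dTau, partialDeriv_mul hf hg]
  ring

lemma dTauBar_mul (hf : DifferentiableAt ℝ f τ) (hg : DifferentiableAt ℝ g τ) :
    dTauBar (fun w => f w * g w) τ = f τ * dTauBar g τ + g τ * dTauBar f τ := by
  simp only [dTauBar, partialDeriv_mul hf hg]
  ring

lemma dTauBar_mul_of_hasDerivAt {a : ℂ} (hf : DifferentiableAt ℝ f τ) (hg : HasDerivAt g a τ) :
    dTauBar (fun w => f w * g w) τ = g τ * dTauBar f τ := by
  rw [dTauBar_mul hf (hg.differentiableAt.restrictScalars ℝ), dTauBar_of_hasDerivAt hg, mul_zero,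
    zero_add]

lemma dTauBar_const_mul (c : ℂ) (hf : DifferentiableAt ℝ f τ) :
    dTauBar (fun w => c * f w) τ = c * dTauBar f τ := by
  rw [dTauBar_mul (differentiableAt_const c) hf, dTauBar_of_hasDerivAt (hasDerivAt_const τ c),
    mul_zero, add_zero]

lemma Filter.EventuallyEq.dTauBar_eq (hfg : f =ᶠ[𝓝 τ] g) : dTauBar f τ = dTauBar g τ := by
  simp only [dTauBar, partialDeriv, hfg.fderiv_eq]

lemma hasFDerivAt_ofReal_comp_im {φ : ℝ → ℝ} {φ' : ℝ} (hφ : HasDerivAt φ φ' τ.im) :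
    HasFDerivAt (fun w : ℂ => (φ w.im : ℂ)) (ofRealCLM.comp (φ' • imCLM)) τ :=
  ofRealCLM.hasFDerivAt.comp τ (hφ.comp_hasFDerivAt τ imCLM.hasFDerivAt)

lemma dTauBar_ofReal_comp_im {φ : ℝ → ℝ} {φ' : ℝ} (hφ : HasDerivAt φ φ' τ.im) :
    dTauBar (fun w : ℂ => (φ w.im : ℂ)) τ = I / 2 * φ' := by
  simp [dTauBar, partialDeriv, (hasFDerivAt_ofReal_comp_im hφ).fderiv]
  ring

lemma dTauBar_im_rpow_mul (hτ : 0 < τ.im) (α : ℝ) (hf : DifferentiableAt ℝ f τ) :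
    dTauBar (fun w => ((w.im ^ α : ℝ) : ℂ) * f w) τ =
      (τ.im ^ α : ℝ) * dTauBar f τ + I / 2 * α * (τ.im ^ α / τ.im : ℝ) * f τ := by
  have hweight : HasDerivAt (· ^ α) (α * τ.im ^ (α - 1)) τ.im :=
    Real.hasDerivAt_rpow_const (Or.inl hτ.ne')
  rw [dTauBar_mul (hasFDerivAt_ofReal_comp_im hweight).differentiableAt hf,
    dTauBar_ofReal_comp_im hweight, Real.rpow_sub_one hτ.ne']
  push_cast
  ring

noncomputable def dTauCLM : (ℂ →L[ℝ] ℂ) →L[ℝ] ℂ :=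
  (1 / 2 : ℂ) • (ContinuousLinearMap.apply ℝ ℂ 1 - I • ContinuousLinearMap.apply ℝ ℂ I)

noncomputable def dTauBarCLM : (ℂ →L[ℝ] ℂ) →L[ℝ] ℂ :=
  (1 / 2 : ℂ) • (ContinuousLinearMap.apply ℝ ℂ 1 + I • ContinuousLinearMap.apply ℝ ℂ I)

lemma dTau_eq_dTauCLM_comp : dTau f = dTauCLM ∘ fderiv ℝ f := by
  funext w
  simp [dTau, dTauCLM, partialDeriv]

lemma dTauBar_eq_dTauBarCLM_comp : dTauBar f = dTauBarCLM ∘ fderiv ℝ f := by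
  funext w
  simp [dTauBar, dTauBarCLM, partialDeriv]
  ring

lemma partialDeriv_dTau {D : ℂ →L[ℝ] ℂ →L[ℝ] ℂ} (hf : HasFDerivAt (fderiv ℝ f) D τ) (d : ℂ) :
    partialDeriv d (dTau f) τ = 1 / 2 * (D d 1 - I * D d I) := by
  rw [partialDeriv, dTau_eq_dTauCLM_comp, (dTauCLM.hasFDerivAt.comp τ hf).fderiv]
  simp [dTauCLM]

lemma partialDeriv_dTauBar {D : ℂ →L[ℝ] ℂ →L[ℝ] ℂ} (hf : HasFDerivAt (fderiv ℝ f) D τ)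
    (d : ℂ) : partialDeriv d (dTauBar f) τ = 1 / 2 * (D d 1 + I * D d I) := by
  rw [partialDeriv, dTauBar_eq_dTauBarCLM_comp, (dTauBarCLM.hasFDerivAt.comp τ hf).fderiv]
  simp [dTauBarCLM]
  ring

lemma ContDiffAt.hasFDerivAt_fderiv (hf : ContDiffAt ℝ 2 f τ) :
    HasFDerivAt (fderiv ℝ f) (fderiv ℝ (fderiv ℝ f) τ) τ :=
  ((hf.fderiv_right (m := 1) le_rfl).differentiableAt one_ne_zero).hasFDerivAt

lemma ContDiffAt.differentiableAt_dTau (hf : ContDiffAt ℝ 2 f τ) :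
    DifferentiableAt ℝ (dTau f) τ := by
  rw [dTau_eq_dTauCLM_comp]
  exact (dTauCLM.hasFDerivAt.comp τ hf.hasFDerivAt_fderiv).differentiableAt

lemma ContDiffAt.dTau_dTauBar_eq (hf : ContDiffAt ℝ 2 f τ) :
    dTau (dTauBar f) τ = dTauBar (dTau f) τ := by
  have hsymm := hf.isSymmSndFDerivAt (by simp) 1 I
  simp only [dTau, dTauBar, partialDeriv_dTau hf.hasFDerivAt_fderiv,
    partialDeriv_dTauBar hf.hasFDerivAt_fderiv]
  linear_combination (I / 2) * hsymm

end Wirtinger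

lemma hasPolyGrowth_indicator_one (s : Set ℤ) : HasPolyGrowth (s.indicator 1) :=
  ⟨1, 0, fun n => by
    simpa using norm_indicator_le_norm_self (s := s) (f := (1 : ℤ → ℂ)) (a := n)⟩

lemma jacobiThetaML_eq_thetaSeries (m ℓ : ℤ) (τ z : ℂ) :
    jacobiThetaML m ℓ τ z =
      thetaSeries ({r | r ≡ ℓ [ZMOD 2 * m]}.indicator 1) z (τ / (2 * m)) := by
  refine (tsum_subtype {r : ℤ | r ≡ ℓ [ZMOD 2 * m]} fun r : ℤ =>
    cexp (2 * π * I * ((r : ℂ) ^ 2 * τ / (4 * m) + r * z))).trans (tsum_congr fun r => ?_)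
  simp only [Set.indicator_apply, Pi.one_apply, ite_mul, one_mul, zero_mul, jacobiTheta₂_term]
  congr 2
  ring

section jacobiThetaML

variable {m : ℤ} (ℓ : ℤ) {τ : ℂ}

lemma im_div_two_mul_pos (hm : 0 < m) (hτ : 0 < τ.im) : 0 < (τ / (2 * m)).im := by
  rw [show (2 * m : ℂ) = ((2 * m : ℝ) : ℂ) by push_cast; ring, Complex.div_ofReal_im]
  have : (0 : ℝ) < m := by exact_mod_cast hm
  positivity

/-- Holomorphy in `τ` together with the heat equation `8πim ∂_τ ϑ = ∂²_z ϑ`. -/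
lemma hasDerivAt_jacobiThetaML_fst (hm : 0 < m) (hτ : 0 < τ.im) (z : ℂ) :
    HasDerivAt (jacobiThetaML m ℓ · z)
      (iteratedDeriv 2 (jacobiThetaML m ℓ τ) z / (8 * π * I * m)) τ := by
  have hτ' := im_div_two_mul_pos hm hτ
  have ha := hasPolyGrowth_indicator_one {r | r ≡ ℓ [ZMOD 2 * m]}
  have hderiv :=
    (hasDerivAt_thetaSeries_snd ha z hτ').comp τ ((hasDerivAt_id τ).div_const (2 * m))
  rw [funext (jacobiThetaML_eq_thetaSeries m ℓ τ), iteratedDeriv_two_thetaSeries ha z hτ']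
  refine (hderiv.congr_deriv ?_).congr_of_eventuallyEq
    (Eventually.of_forall fun w => jacobiThetaML_eq_thetaSeries m ℓ w z)
  have : (m : ℂ) ≠ 0 := by exact_mod_cast hm.ne'
  field_simp
  ring

lemma exists_jacobiThetaML_ne_zero (hm : 0 < m) (hτ : 0 < τ.im) :
    ∃ z, jacobiThetaML m ℓ τ z ≠ 0 := by
  by_contra! h
  have ha := hasPolyGrowth_indicator_one {r | r ≡ ℓ [ZMOD 2 * m]}
  have := ha.eq_zero_of_forall_thetaSeries_eq_zero (im_div_two_mul_pos hm hτ)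
    fun x => by rw [← jacobiThetaML_eq_thetaSeries, h]
  simpa using congrFun this ℓ

lemma heatOp_mul_jacobiThetaML (hm : 0 < m) {h : ℂ → ℂ} (hh : DifferentiableAt ℝ h τ)
    (hτ : 0 < τ.im) (z : ℂ) :
    heatOp m (fun w z => h w * jacobiThetaML m ℓ w z) τ z =
      8 * π * I * m * dTau h τ * jacobiThetaML m ℓ τ z := by
  have hθ := hasDerivAt_jacobiThetaML_fst ℓ hm hτ z
  rw [heatOp, dTau_mul hh (hθ.differentiableAt.restrictScalars ℝ), dTau_of_hasDerivAt hθ,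
    iteratedDeriv_const_mul_field]
  have : (m : ℂ) ≠ 0 := by exact_mod_cast hm.ne'
  field_simp
  ring

end jacobiThetaML

lemma skewCasimir_mul_jacobiThetaML (k : ℤ) {m : ℤ} (hm : 0 < m) (ℓ : ℤ) {h : ℂ → ℂ} {τ : ℂ}
    (hh : ContDiffAt ℝ 2 h τ) (hτ : 0 < τ.im) (z : ℂ) :
    skewCasimir k m (fun w z => h w * jacobiThetaML m ℓ w z) τ z =
      2 * jacobiThetaML m ℓ τ z * (2 * I * τ.im * ((k : ℂ) - 1 / 2) * dTau h τ +
        4 * τ.im ^ 2 * dTau (dTauBar h) τ) := by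
  set α : ℝ := k - 1 / 2
  have hev : (fun w => ((w.im ^ α : ℝ) : ℂ) *
        heatOp m (fun w z => h w * jacobiThetaML m ℓ w z) w z) =ᶠ[𝓝 τ]
      fun w => 8 * π * I * m * (((w.im ^ α : ℝ) : ℂ) * dTau h w * jacobiThetaML m ℓ w z) := by
    filter_upwards [hh.eventually (by simp),
      (isOpen_lt continuous_const continuous_im).mem_nhds hτ] with w hw hw'
    rw [heatOp_mul_jacobiThetaML ℓ hm (hw.differentiableAt (by simp)) hw' z]
    ring
  have hdiff : DifferentiableAt ℝ (fun w => ((w.im ^ α : ℝ) : ℂ) * dTau h w) τ :=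
    (ofRealCLM.differentiableAt.comp τ
      ((Real.differentiableAt_rpow_const_of_ne α hτ.ne').comp τ imCLM.differentiableAt)).mul
        hh.differentiableAt_dTau
  have hθ := hasDerivAt_jacobiThetaML_fst ℓ hm hτ z
  rw [skewCasimir, hev.dTauBar_eq,
    dTauBar_const_mul (f := fun w => ((w.im ^ α : ℝ) : ℂ) * dTau h w * jacobiThetaML m ℓ w z) _
      (hdiff.mul (hθ.differentiableAt.restrictScalars ℝ)),
    dTauBar_mul_of_hasDerivAt hdiff hθ,
    dTauBar_im_rpow_mul hτ α hh.differentiableAt_dTau, ← hh.dTau_dTauBar_eq,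
    show (1 : ℝ) / 2 - k = -α by ring, Real.rpow_neg hτ.le]
  have hP : 0 < τ.im ^ α := Real.rpow_pos_of_pos hτ α
  generalize τ.im ^ α = P at hP ⊢
  have : (m : ℂ) ≠ 0 := by exact_mod_cast hm.ne'
  have : (P : ℂ) ≠ 0 := by exact_mod_cast hP.ne'
  have : (τ.im : ℂ) ≠ 0 := by exact_mod_cast hτ.ne'
  push_cast [α]
  field_simp
  linear_combination (8 * I * jacobiThetaML m ℓ τ z * dTau h τ
    - 16 * I * jacobiThetaML m ℓ τ z * dTau h τ * k
    - 32 * jacobiThetaML m ℓ τ z * τ.im * dTau (dTauBar h) τ) * I_sq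

/-- For `h` twice continuously differentiable on `ℍ` and fixed `τ ∈ ℍ`, the function
`Φ(τ, z) = h(τ) ϑ_{m,ℓ}(τ, z)` is annihilated by `C^sk_{k,m}` at `τ` (for all `z`)
iff `2iv(k − 1/2) ∂_τ h + 4v² ∂_τ ∂_τ̄ h = 0` at `τ`, where `v = Im τ`. -/
theorem skewCasimir_htheta_eq_zero_iff (k m ℓ : ℤ) (hm : 1 ≤ m) (h : ℂ → ℂ)
    (hh : ContDiffOn ℝ 2 h {τ : ℂ | 0 < τ.im}) (τ : ℂ) (hτ : 0 < τ.im) :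
    (∀ z : ℂ, skewCasimir k m (fun w z => h w * jacobiThetaML m ℓ w z) τ z = 0) ↔
      2 * Complex.I * (τ.im : ℂ) * ((k : ℂ) - 1 / 2) * dTau h τ +
        4 * (τ.im : ℂ) ^ 2 * dTau (dTauBar h) τ = 0 := by
  have hm' : 0 < m := hm
  have hhτ : ContDiffAt ℝ 2 h τ :=
    hh.contDiffAt ((isOpen_lt continuous_const continuous_im).mem_nhds hτ)
  simp only [skewCasimir_mul_jacobiThetaML k hm' ℓ hhτ hτ, mul_eq_zero, two_ne_zero, false_or]
  obtain ⟨z, hz⟩ := exists_jacobiThetaML_ne_zero ℓ hm' hτ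
  exact ⟨fun H => (H z).resolve_left hz, fun hE _ => Or.inr hE⟩
end

section
/- Let m ≥ 1 be an integer and let c : ℤ × ℤ → ℂ be a function satisfying c(n + λr + mλ², r + 2mλ) = c(n, r) for all n, r, λ ∈ ℤ. Then c(n', r') = c(n, r) whenever n, n', r, r' ∈ ℤ satisfy r' ≡ r (mod 2m) and r'² − 4mn' = r² − 4mn. In other words, c(n, r) depends only on the discriminant D = r² − 4mn and on the residue class of r modulo 2m. -/
/-!
The substitution `(n, r) ↦ (n + λr + mλ², r + 2mλ)` preserves the discriminant `r² − 4mn` and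
moves `r` by a multiple of `2m`. Conversely, once `r' = r + 2mλ` is fixed, equality of discriminants
determines `n'` (as `4m ≠ 0`), so every pair with the same discriminant and residue lies in the
orbit of `(n, r)`, on which `c` is constant.
-/

namespace JacobiCoeff

/-- The coefficient index shift induced by `z ↦ z + λτ` on a Jacobi form of index `m`. -/
def shift (m l : ℤ) (p : ℤ × ℤ) : ℤ × ℤ :=
  (p.1 + l * p.2 + m * l ^ 2, p.2 + 2 * m * l)

def disc (m : ℤ) (p : ℤ × ℤ) : ℤ :=
  p.2 ^ 2 - 4 * m * p.1

@[simp]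
theorem disc_shift (m l : ℤ) (p : ℤ × ℤ) : disc m (shift m l p) = disc m p := by
  simp only [disc, shift]
  ring

theorem exists_shift_eq_of_disc_eq {m : ℤ} (hm : m ≠ 0) {p q : ℤ × ℤ}
    (hmod : q.2 ≡ p.2 [ZMOD 2 * m]) (hdisc : disc m q = disc m p) :
    ∃ l, shift m l p = q := by
  obtain ⟨l, hl⟩ := Int.ModEq.dvd hmod.symm
  have hq₂ : q.2 = p.2 + 2 * m * l := by linarith
  refine ⟨l, Prod.ext ?_ hq₂.symm⟩
  show p.1 + l * p.2 + m * l ^ 2 = q.1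
  have hdisc' : disc m (shift m l p) = disc m q := by rw [disc_shift, hdisc]
  simp only [disc, shift, ← hq₂] at hdisc'
  have h4m : 4 * m ≠ 0 := mul_ne_zero four_ne_zero hm
  exact (mul_left_cancel₀ h4m (by linarith)).symm

end JacobiCoeff

open JacobiCoeff in
/-- If `c : ℤ × ℤ → ℂ` satisfies the elliptic invariance
`c(n + λr + mλ², r + 2mλ) = c(n, r)`, then `c(n, r)` depends only on the discriminant
`D = r² − 4mn` and on `r mod 2m`. -/
theorem coeff_depends_only_on_disc_and_residue (m : ℤ) (hm : 1 ≤ m) (c : ℤ × ℤ → ℂ)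
    (hc : ∀ n r l : ℤ, c (n + l * r + m * l ^ 2, r + 2 * m * l) = c (n, r)) :
    ∀ n n' r r' : ℤ, r' ≡ r [ZMOD 2 * m] →
      r' ^ 2 - 4 * m * n' = r ^ 2 - 4 * m * n → c (n', r') = c (n, r) := by
  intro n n' r r' hmod hdisc
  obtain ⟨l, hl⟩ := exists_shift_eq_of_disc_eq (p := (n, r)) (q := (n', r')) (by omega) hmod hdisc
  rw [← hl]
  exact hc n r l
end
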